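/- Fix an arbitrary constant γ > 1. There exists Δ = Δ(γ) > 0 such that for every δ ≤ Δ, if m = δn and ε = ε(n) = γ·2^{-1/δ}·√(πn/2), then both 2^n·Σ_{k=0}^{⌊n/4⌋} C(n,k)·P_{ρ_k}( |√n·X| ≤ ε and |√n·Y| ≤ ε )^m and 2^n·Σ_{k=⌈3n/4⌉}^{n} C(n,k)·P_{ρ_k}( |√n·X| ≤ ε and |√n·Y| ≤ ε )^m are o( (2^n·P(|Z| ≤ ε/√n)^m)² ) as n → ∞, where ρ_k = 1 − 2k/n. -/

import Mathlib

open MeasureTheory ProbabilityTheory Filter Asymptotics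

/-- Joint law of a `ρ`-correlated pair of standard Gaussians. -/
noncomputable def corrPair (ρ : ℝ) : Measure (ℝ × ℝ) :=
  Measure.map (fun p : ℝ × ℝ => (p.1, ρ * p.1 + Real.sqrt (1 - ρ ^ 2) * p.2))
    ((gaussianReal 0 1).prod (gaussianReal 0 1))

open Real Set Topology

/-!
Put `t = ε / √n = γ 2^(-1/δ) √(π/2)`, which does not depend on `n`, and `p = P(|Z| ≤ t)`.
Since `p ≈ 2t/√(2π) = γ 2^(-1/δ)`, we have `2^n p^m ≈ γ^m`. Cut the range `k ≤ n/4` at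
`k = βn` with `β = 2^(-1/(8δ))`. For `k ≤ βn` we only use `P_ρ(box) ≤ p`; the binomial
coefficients `C(n,k)`, `k ≤ βn`, sum to `e^{O(β log(1/β)) n}`, which `γ^m = γ^{δn}` beats once
`δ` is small. For `βn < k ≤ n/4` we have `1 - ρ_k² ≥ 3β`, so given `X` the variable `Y` is
spread over a width `√(1 - ρ_k²)` and `P_ρ(box) ≤ p · 2t/√(2π·3β)`. The extra factor contributes
`(2t/√(2π))^m (3β)^(-m/2) ≈ γ^m 2^(-n) 2^(n/16)`, which beats the at most `2^(0.82 n)` binomial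
coefficients. The upper tail is the lower one after `k ↦ n - k`, i.e. `ρ ↦ -ρ`.
-/

lemma gaussianPDFReal_zero_one_le (x : ℝ) : gaussianPDFReal 0 1 x ≤ (√(2 * π))⁻¹ := by
  rw [gaussianPDFReal_def]
  simp only [NNReal.coe_one, mul_one, sub_zero]
  exact mul_le_of_le_one_right (by positivity) (exp_le_one_iff.2 (by nlinarith [sq_nonneg x]))

lemma exp_neg_sq_div_two_le_gaussianPDFReal {x t : ℝ} (hx : |x| ≤ t) :
    (√(2 * π))⁻¹ * exp (-t ^ 2 / 2) ≤ gaussianPDFReal 0 1 x := by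
  rw [gaussianPDFReal_def]
  simp only [NNReal.coe_one, mul_one, sub_zero]
  gcongr ?_ * exp ?_
  nlinarith [sq_abs x, abs_nonneg x]

lemma gaussianReal_Icc_le (a b : ℝ) :
    gaussianReal 0 1 (Icc a b) ≤ ENNReal.ofReal ((b - a) / √(2 * π)) := by
  rw [gaussianReal_apply 0 one_ne_zero]
  calc ∫⁻ x in Icc a b, gaussianPDF 0 1 x
      ≤ ∫⁻ _ in Icc a b, ENNReal.ofReal (√(2 * π))⁻¹ :=
        lintegral_mono fun x => ENNReal.ofReal_le_ofReal (gaussianPDFReal_zero_one_le x)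
    _ = ENNReal.ofReal ((b - a) / √(2 * π)) := by
        rw [setLIntegral_const, Real.volume_Icc, ← ENNReal.ofReal_mul (by positivity),
          div_eq_mul_inv, mul_comm]

lemma le_gaussianReal_Icc (t : ℝ) :
    ENNReal.ofReal (2 * t / √(2 * π) * exp (-t ^ 2 / 2)) ≤ gaussianReal 0 1 (Icc (-t) t) := by
  rw [gaussianReal_apply 0 one_ne_zero]
  calc ENNReal.ofReal (2 * t / √(2 * π) * exp (-t ^ 2 / 2))
      = ∫⁻ _ in Icc (-t) t, ENNReal.ofReal ((√(2 * π))⁻¹ * exp (-t ^ 2 / 2)) := by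
        rw [setLIntegral_const, Real.volume_Icc, ← ENNReal.ofReal_mul (by positivity)]
        congr 1
        ring
    _ ≤ ∫⁻ x in Icc (-t) t, gaussianPDF 0 1 x :=
        setLIntegral_mono (measurable_gaussianPDF 0 1) fun x hx =>
          ENNReal.ofReal_le_ofReal (exp_neg_sq_div_two_le_gaussianPDFReal (abs_le.2 hx))

lemma measurable_corrPairMap (ρ : ℝ) :
    Measurable (fun p : ℝ × ℝ => (p.1, ρ * p.1 + √(1 - ρ ^ 2) * p.2)) := by
  fun_prop

lemma corrPair_map_fst (ρ : ℝ) : (corrPair ρ).map Prod.fst = gaussianReal 0 1 := by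
  rw [corrPair, Measure.map_map measurable_fst (measurable_corrPairMap ρ)]
  exact (Measure.map_fst_prod).trans (by rw [measure_univ, one_smul])

lemma corrPair_prod_le (ρ : ℝ) (s s' : Set ℝ) : corrPair ρ (s ×ˢ s') ≤ gaussianReal 0 1 s :=
  calc corrPair ρ (s ×ˢ s') ≤ corrPair ρ (Prod.fst ⁻¹' s) := measure_mono fun _ hp => hp.1
    _ ≤ (corrPair ρ).map Prod.fst s := Measure.le_map_apply measurable_fst.aemeasurable s
    _ = gaussianReal 0 1 s := by rw [corrPair_map_fst]

lemma corrPair_neg (ρ : ℝ) : corrPair (-ρ) = (corrPair ρ).map (Prod.map id Neg.neg) := by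
  have hflip : ((gaussianReal 0 1).prod (gaussianReal 0 1)).map (Prod.map id Neg.neg) =
      (gaussianReal 0 1).prod (gaussianReal 0 1) := by
    rw [← Measure.map_prod_map _ _ measurable_id measurable_neg, Measure.map_id,
      gaussianReal_map_neg, neg_zero]
  rw [corrPair, corrPair, Measure.map_map (by fun_prop) (measurable_corrPairMap ρ)]
  conv_lhs => rw [← hflip, Measure.map_map (measurable_corrPairMap (-ρ)) (by fun_prop)]
  congr 1
  ext p <;> simp
  ring

lemma corrPair_prod_Icc_le {ρ : ℝ} (hρ : ρ ^ 2 < 1) {s : Set ℝ} (hs : MeasurableSet s) (a b : ℝ) :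
    corrPair ρ (s ×ˢ Icc a b) ≤
      ENNReal.ofReal ((b - a) / (√(1 - ρ ^ 2) * √(2 * π))) * gaussianReal 0 1 s := by
  set σ := √(1 - ρ ^ 2)
  have hσ : 0 < σ := sqrt_pos.2 (by linarith)
  set M := ENNReal.ofReal ((b - a) / (σ * √(2 * π)))
  rw [corrPair, Measure.map_apply (measurable_corrPairMap ρ) (hs.prod measurableSet_Icc),
    Measure.prod_apply (measurable_corrPairMap ρ (hs.prod measurableSet_Icc))]
  -- the slice over `x ∈ s` is the event `ρ x + σ Y ∈ [a, b]`, an interval of length `(b - a) / σ`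
  have hslice (x : ℝ) : gaussianReal 0 1 (Prod.mk x ⁻¹' ((fun p : ℝ × ℝ =>
      (p.1, ρ * p.1 + σ * p.2)) ⁻¹' (s ×ˢ Icc a b))) ≤ s.indicator (fun _ => M) x := by
    by_cases hx : x ∈ s
    · rw [indicator_of_mem hx]
      calc _ ≤ gaussianReal 0 1 (Icc ((a - ρ * x) / σ) ((b - ρ * x) / σ)) := by
            refine measure_mono fun y hy => ?_
            obtain ⟨hy₁, hy₂⟩ := hy.2
            exact ⟨(div_le_iff₀ hσ).2 (by linarith), (le_div_iff₀ hσ).2 (by linarith)⟩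
        _ ≤ M := by
            refine (gaussianReal_Icc_le _ _).trans_eq (congrArg _ ?_)
            field_simp
            ring
    · rw [indicator_of_notMem hx]
      exact (measure_mono fun y hy => hx hy.1).trans_eq measure_empty
  calc _ ≤ ∫⁻ x, s.indicator (fun _ => M) x ∂gaussianReal 0 1 := lintegral_mono hslice
    _ = M * gaussianReal 0 1 s := by rw [lintegral_indicator hs, setLIntegral_const]

lemma corrPair_neg_prod_Icc (ρ : ℝ) {s : Set ℝ} (hs : MeasurableSet s) (t : ℝ) :
    corrPair (-ρ) (s ×ˢ Icc (-t) t) = corrPair ρ (s ×ˢ Icc (-t) t) := by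
  rw [corrPair_neg, Measure.map_apply (by fun_prop) (hs.prod measurableSet_Icc),
    preimage_prod_map_prod, preimage_id]
  congr 2
  ext x
  simp only [mem_preimage, mem_Icc, neg_le_neg_iff, neg_le, and_comm]

open Finset in
lemma sum_range_choose_mul_pow_le {x : ℝ} (hx : 0 ≤ x) (n K : ℕ) :
    ∑ k ∈ range (K + 1), (n.choose k : ℝ) * x ^ k ≤ (1 + x) ^ n := by
  calc ∑ k ∈ range (K + 1), (n.choose k : ℝ) * x ^ k
      ≤ ∑ k ∈ range (max K n + 1), (n.choose k : ℝ) * x ^ k :=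
        sum_le_sum_of_subset_of_nonneg (range_subset_range.2 (by omega)) fun _ _ _ => by positivity
    _ = ∑ k ∈ range (n + 1), (n.choose k : ℝ) * x ^ k := by
        refine (sum_subset (range_subset_range.2 (by omega)) fun k _ hk => ?_).symm
        rw [Nat.choose_eq_zero_of_lt (by simpa using hk), Nat.cast_zero, zero_mul]
    _ = (1 + x) ^ n := by
        rw [add_comm 1 x, add_pow]
        exact sum_congr rfl fun k _ => by ring

open Finset in
lemma sum_range_choose_le {x κ : ℝ} (hx₀ : 0 < x) (hx₁ : x ≤ 1) {n K : ℕ} (hK : (K : ℝ) ≤ κ * n) :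
    ∑ k ∈ range (K + 1), (n.choose k : ℝ) ≤ ((1 + x) / x ^ κ) ^ n := by
  have hxK : x ^ (κ * n) ≤ x ^ K := by
    simpa using rpow_le_rpow_of_exponent_ge hx₀ hx₁ hK
  calc ∑ k ∈ range (K + 1), (n.choose k : ℝ)
      ≤ ∑ k ∈ range (K + 1), (n.choose k : ℝ) * x ^ k / x ^ K :=
        sum_le_sum fun k hk => by
          rw [le_div_iff₀ (by positivity)]
          exact mul_le_mul_of_nonneg_left
            (pow_le_pow_of_le_one hx₀.le hx₁ (by simpa [Nat.lt_succ_iff] using hk)) (by positivity)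
    _ ≤ (1 + x) ^ n / x ^ (κ * n) := by
        rw [← sum_div]
        exact div_le_div₀ (by positivity) (sum_range_choose_mul_pow_le hx₀.le n K)
          (by positivity) hxK
    _ = ((1 + x) / x ^ κ) ^ n := by rw [rpow_mul_natCast hx₀.le, div_pow]

open Finset in
lemma sum_choose_mul_rpow_le {q : ℕ → ℝ} {p B β δ : ℝ} (n : ℕ) (hδ : 0 ≤ δ) (hβ₀ : 0 < β)
    (hβ₁ : β ≤ 1) (hB : 0 ≤ B) (hq₀ : ∀ k, 0 ≤ q k) (hqp : ∀ k, q k ≤ p)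
    (hqB : ∀ k : ℕ, β * n < k → 4 * k ≤ n → q k ≤ B) :
    ∑ k ∈ range (n / 4 + 1), (n.choose k : ℝ) * q k ^ (δ * n) ≤
      ((1 + β) / β ^ β * p ^ δ) ^ n + ((1 + 1 / 3) / (1 / 3) ^ (1 / 4 : ℝ) * B ^ δ) ^ n := by
  have hp : 0 ≤ p := (hq₀ 0).trans (hqp 0)
  set K := ⌊β * n⌋₊
  rw [← sum_filter_add_sum_filter_not _ (· ≤ K)]
  gcongr ?_ + ?_
  · calc ∑ k ∈ (range (n / 4 + 1)).filter (· ≤ K), (n.choose k : ℝ) * q k ^ (δ * n)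
        ≤ ∑ k ∈ range (K + 1), (n.choose k : ℝ) * p ^ (δ * n) := by
          refine (sum_le_sum fun k _ => ?_).trans (sum_le_sum_of_subset_of_nonneg ?_ ?_)
          · exact mul_le_mul_of_nonneg_left (rpow_le_rpow (hq₀ k) (hqp k) (by positivity))
              (by positivity)
          · intro k hk
            simp only [mem_filter, Finset.mem_range] at hk ⊢
            omega
          · exact fun _ _ _ => by positivity
      _ ≤ ((1 + β) / β ^ β) ^ n * (p ^ δ) ^ n := by
          rw [← sum_mul, rpow_mul hp, rpow_natCast]
          exact mul_le_mul_of_nonneg_right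
            (sum_range_choose_le hβ₀ hβ₁ (Nat.floor_le (by positivity))) (by positivity)
      _ = ((1 + β) / β ^ β * p ^ δ) ^ n := (mul_pow _ _ _).symm
  -- `x = 1/3` is the optimal parameter of `sum_range_choose_le` for `K = n/4`
  · calc ∑ k ∈ (range (n / 4 + 1)).filter (¬ · ≤ K), (n.choose k : ℝ) * q k ^ (δ * n)
        ≤ ∑ k ∈ range (n / 4 + 1), (n.choose k : ℝ) * B ^ (δ * n) := by
          refine (sum_le_sum fun k hk => ?_).trans
            (sum_le_sum_of_subset_of_nonneg (filter_subset _ _) fun _ _ _ => by positivity)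
          simp only [mem_filter, Finset.mem_range, not_le] at hk
          refine mul_le_mul_of_nonneg_left (rpow_le_rpow (hq₀ k) (hqB k ?_ ?_) (by positivity))
            (by positivity)
          · exact (Nat.floor_lt (by positivity)).1 hk.2
          · exact_mod_cast (by omega : 4 * k ≤ n)
      _ ≤ ((1 + 1 / 3) / (1 / 3) ^ (1 / 4 : ℝ)) ^ n * (B ^ δ) ^ n := by
          rw [← sum_mul, rpow_mul hB, rpow_natCast]
          refine mul_le_mul_of_nonneg_right
            (sum_range_choose_le (by norm_num) (by norm_num) ?_) (by positivity)
          rw [one_div_mul_eq_div]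
          exact Nat.cast_div_le
      _ = ((1 + 1 / 3) / (1 / 3) ^ (1 / 4 : ℝ) * B ^ δ) ^ n := (mul_pow _ _ _).symm

lemma three_mul_le_one_sub_sq {β : ℝ} (hβ : 0 ≤ β) {k n : ℕ} (hk : β * n < k) (hkn : 4 * k ≤ n) :
    3 * β ≤ 1 - (1 - 2 * (k : ℝ) / n) ^ 2 := by
  have hk₀ : (0 : ℝ) < k := (mul_nonneg hβ n.cast_nonneg).trans_lt hk
  have hn : (0 : ℝ) < n := hk₀.trans_le (by exact_mod_cast (by omega : k ≤ n))
  have hkn' : 4 * (k : ℝ) ≤ n := by exact_mod_cast hkn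
  rw [show 1 - (1 - 2 * (k : ℝ) / n) ^ 2 = 4 * k * (n - k) / n ^ 2 by field_simp; ring,
    le_div_iff₀ (by positivity)]
  nlinarith [mul_le_mul_of_nonneg_right hk.le (by linarith : (0 : ℝ) ≤ n - k)]

lemma isLittleO_of_le_pow_add_pow {f g : ℕ → ℝ} {a b : ℝ} (ha₀ : 0 ≤ a) (ha₁ : a < 1)
    (hb₀ : 0 ≤ b) (hb₁ : b < 1) (hf : ∀ n, ‖f n‖ ≤ (a ^ n + b ^ n) * ‖g n‖) :
    f =o[atTop] g := by
  have hlim : Tendsto (fun n => a ^ n + b ^ n) atTop (𝓝 0) := by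
    simpa using (tendsto_pow_atTop_nhds_zero_of_lt_one ha₀ ha₁).add
      (tendsto_pow_atTop_nhds_zero_of_lt_one hb₀ hb₁)
  have hsmall : (fun n => (a ^ n + b ^ n) * g n) =o[atTop] g := by
    simpa using ((isLittleO_one_iff ℝ).2 hlim).mul_isBigO (isBigO_refl g atTop)
  refine IsBigO.trans_isLittleO (IsBigO.of_bound 1 (Eventually.of_forall fun n => ?_)) hsmall
  rw [one_mul, norm_mul, Real.norm_of_nonneg (by positivity : 0 ≤ a ^ n + b ^ n)]
  exact hf n

lemma corrPair_Icc_prod_Icc_toReal_le {ρ t β : ℝ} (ht : 0 ≤ t) (hβ : 0 < β)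
    (hρ : 3 * β ≤ 1 - ρ ^ 2) :
    (corrPair ρ (Icc (-t) t ×ˢ Icc (-t) t)).toReal ≤
      (gaussianReal 0 1 (Icc (-t) t)).toReal * (2 * t / √(2 * π)) / √(3 * β) := by
  calc (corrPair ρ (Icc (-t) t ×ˢ Icc (-t) t)).toReal
      ≤ (ENNReal.ofReal ((t - -t) / (√(1 - ρ ^ 2) * √(2 * π))) *
          gaussianReal 0 1 (Icc (-t) t)).toReal :=
        ENNReal.toReal_mono (by finiteness)
          (corrPair_prod_Icc_le (by linarith) measurableSet_Icc _ _)
    _ = (gaussianReal 0 1 (Icc (-t) t)).toReal * (2 * t / √(2 * π)) / √(1 - ρ ^ 2) := by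
        rw [ENNReal.toReal_mul, ENNReal.toReal_ofReal (div_nonneg (by linarith) (by positivity))]
        ring
    _ ≤ (gaussianReal 0 1 (Icc (-t) t)).toReal * (2 * t / √(2 * π)) / √(3 * β) := by
        gcongr

lemma isLittleO_two_pow_mul_of_le_pow_add_pow {f : ℕ → ℝ} {P X Y : ℝ} (hP : 0 < P)
    (hX₀ : 0 ≤ X) (hX : X < 2 * P ^ 2) (hY₀ : 0 ≤ Y) (hY : Y < 2 * P ^ 2) (hf₀ : ∀ n, 0 ≤ f n)
    (hf : ∀ n, f n ≤ X ^ n + Y ^ n) :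
    (fun n => 2 ^ n * f n) =o[atTop] (fun n => (2 ^ n * P ^ n) ^ 2) := by
  have h2P : 0 < 2 * P ^ 2 := by positivity
  refine isLittleO_of_le_pow_add_pow (div_nonneg hX₀ h2P.le) ((div_lt_one h2P).2 hX)
    (div_nonneg hY₀ h2P.le) ((div_lt_one h2P).2 hY) fun n => ?_
  rw [Real.norm_of_nonneg (mul_nonneg (by positivity) (hf₀ n)), Real.norm_of_nonneg (by positivity)]
  calc 2 ^ n * f n ≤ 2 ^ n * (X ^ n + Y ^ n) := by gcongr; exact hf n
    _ = ((X / (2 * P ^ 2)) ^ n + (Y / (2 * P ^ 2)) ^ n) * (2 ^ n * P ^ n) ^ 2 := by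
        rw [div_pow, div_pow, mul_pow, ← pow_mul]
        field_simp
        ring

/-- `2 t / √(2π) * exp (-t² / 2)` is the lower bound of `le_gaussianReal_Icc` for `P(|Z| ≤ t)`;
the conditions make the bases of `sum_choose_mul_rpow_le` smaller than `2 P(|Z| ≤ t) ^ (2δ)`. -/
def TailRatesLtOne (t δ β : ℝ) : Prop :=
  (1 + β) / β ^ β < 2 * (2 * t / √(2 * π) * exp (-t ^ 2 / 2)) ^ δ ∧
    (1 + 1 / 3) / (1 / 3) ^ (1 / 4 : ℝ) * (2 * t / √(2 * π) / √(3 * β)) ^ δ <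
      2 * (2 * t / √(2 * π) * exp (-t ^ 2 / 2)) ^ δ

open Finset in
lemma lowerTail_isLittleO {t δ β : ℝ} (ht : 0 < t) (hδ : 0 ≤ δ) (hβ₀ : 0 < β) (hβ₁ : β ≤ 1)
    (hrates : TailRatesLtOne t δ β) :
    (fun n : ℕ => 2 ^ n * ∑ k ∈ range (n / 4 + 1), (n.choose k : ℝ) *
        (corrPair (1 - 2 * (k : ℝ) / n) (Icc (-t) t ×ˢ Icc (-t) t)).toReal ^ (δ * n))
      =o[atTop] (fun n : ℕ => (2 ^ n * (gaussianReal 0 1 (Icc (-t) t)).toReal ^ (δ * n)) ^ 2) := by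
  set p := (gaussianReal 0 1 (Icc (-t) t)).toReal
  set pbar := 2 * t / √(2 * π)
  have hp : pbar * exp (-t ^ 2 / 2) ≤ p :=
    (ENNReal.ofReal_le_iff_le_toReal (measure_ne_top _ _)).1 (le_gaussianReal_Icc t)
  have hp₀ : 0 < p := lt_of_lt_of_le (by positivity) hp
  have hpδ : 2 * (pbar * exp (-t ^ 2 / 2)) ^ δ * p ^ δ ≤ 2 * (p ^ δ) ^ 2 := by
    rw [sq (p ^ δ), ← mul_assoc]; gcongr
  have hX : (1 + β) / β ^ β * p ^ δ < 2 * (p ^ δ) ^ 2 :=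
    (mul_lt_mul_of_pos_right hrates.1 (by positivity)).trans_le hpδ
  have hY : (1 + 1 / 3) / (1 / 3) ^ (1 / 4 : ℝ) * (p * pbar / √(3 * β)) ^ δ < 2 * (p ^ δ) ^ 2 := by
    rw [mul_div_assoc, mul_rpow hp₀.le (by positivity), mul_left_comm, mul_comm]
    exact (mul_lt_mul_of_pos_right hrates.2 (by positivity)).trans_le hpδ
  rw [show (fun n : ℕ => (2 ^ n * p ^ (δ * n)) ^ 2) = fun n : ℕ => (2 ^ n * (p ^ δ) ^ n) ^ 2 from
    funext fun n => by rw [rpow_mul hp₀.le, rpow_natCast]]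
  refine isLittleO_two_pow_mul_of_le_pow_add_pow (by positivity) (by positivity) hX (by positivity)
    hY (fun n => sum_nonneg fun k _ => by positivity) fun n => ?_
  exact sum_choose_mul_rpow_le n hδ hβ₀ hβ₁ (by positivity) (fun k => ENNReal.toReal_nonneg)
    (fun k => ENNReal.toReal_mono (measure_ne_top _ _) (corrPair_prod_le _ _ _))
    fun k hk hkn =>
      corrPair_Icc_prod_Icc_toReal_le ht.le hβ₀ (three_mul_le_one_sub_sq hβ₀.le hk hkn)

lemma four_thirds_div_rpow_eq :
    (1 + 1 / 3 : ℝ) / (1 / 3) ^ (1 / 4 : ℝ) = exp (2 * log 2 - 3 / 4 * log 3) := by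
  rw [rpow_def_of_pos (by norm_num), ← exp_log (by norm_num : (0 : ℝ) < 1 + 1 / 3), ← exp_sub,
    show (1 + 1 / 3 : ℝ) = 2 ^ 2 / 3 by norm_num, log_div (by norm_num) (by norm_num), log_pow,
    one_div, log_inv]
  ring_nf

lemma seventeen_mul_log_two_lt : 17 * log 2 < 12 * log 3 := by
  have h := log_lt_log (by norm_num) (by norm_num : (2 : ℝ) ^ 17 < 3 ^ 12)
  rwa [log_pow, log_pow, Nat.cast_ofNat, Nat.cast_ofNat] at h

lemma two_rpow_neg_one_div (c : ℝ) : (2 : ℝ) ^ (-(1 : ℝ) / c) = exp (-(log 2 / c)) := by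
  rw [rpow_def_of_pos two_pos]
  ring_nf

lemma two_mul_div_sqrt_two_pi {γ δ : ℝ} :
    2 * (γ * (2 : ℝ) ^ (-(1 : ℝ) / δ) * √(π / 2)) / √(2 * π) = γ * exp (-(log 2 / δ)) := by
  rw [show √(2 * π) = 2 * √(π / 2) by
    rw [← sqrt_sq (zero_le_two : (0 : ℝ) ≤ 2), ← sqrt_mul (by norm_num)]; ring_nf,
    two_rpow_neg_one_div]
  field_simp

lemma tailRatesLtOne_of_lt {γ δ : ℝ} (hγ : 0 < γ) (hδ : 0 < δ)
    (h₁ : (2 : ℝ) ^ (-(1 : ℝ) / (8 * δ)) / δ * (1 + log 2 / (8 * δ)) +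
      (γ * (2 : ℝ) ^ (-(1 : ℝ) / δ) * √(π / 2)) ^ 2 / 2 < log γ)
    (h₂ : δ * (γ * (2 : ℝ) ^ (-(1 : ℝ) / δ) * √(π / 2)) ^ 2 < (12 * log 3 - 17 * log 2) / 8) :
    TailRatesLtOne (γ * (2 : ℝ) ^ (-(1 : ℝ) / δ) * √(π / 2)) δ
      ((2 : ℝ) ^ (-(1 : ℝ) / (8 * δ))) := by
  set t := γ * (2 : ℝ) ^ (-(1 : ℝ) / δ) * √(π / 2)
  have hlower : 2 * (2 * t / √(2 * π) * exp (-t ^ 2 / 2)) ^ δ =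
      γ ^ δ * exp (-(δ * t ^ 2 / 2)) := by
    rw [two_mul_div_sqrt_two_pi, mul_rpow (by positivity) (exp_pos _).le,
      mul_rpow hγ.le (exp_pos _).le, ← exp_mul, ← exp_mul]
    field_simp
    rw [exp_neg, exp_log two_pos]
    norm_num
  rw [two_rpow_neg_one_div] at h₁
  set β := exp (-(log 2 / (8 * δ)))
  have hβ₀ : 0 < β := exp_pos _
  rw [TailRatesLtOne, two_rpow_neg_one_div, hlower, two_mul_div_sqrt_two_pi]
  constructor
  · have h₁' := mul_lt_mul_of_pos_left h₁ hδ
    rw [show δ * (β / δ * (1 + log 2 / (8 * δ)) + t ^ 2 / 2) =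
      β + β * (log 2 / (8 * δ)) + δ * t ^ 2 / 2 by field_simp] at h₁'
    calc (1 + β) / β ^ β ≤ exp β / β ^ β := by gcongr; linarith [add_one_le_exp β]
      _ = exp (β + β * (log 2 / (8 * δ))) := by rw [← exp_mul, ← exp_sub]; ring_nf
      _ < exp (δ * log γ - δ * t ^ 2 / 2) := exp_lt_exp.2 (by linarith)
      _ = γ ^ δ * exp (-(δ * t ^ 2 / 2)) := by rw [rpow_def_of_pos hγ, ← exp_add]; ring_nf
  · have hsqrtβ : √β = exp (-(log 2 / (8 * δ)) / 2) := (exp_half _).symm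
    calc (1 + 1 / 3) / (1 / 3) ^ (1 / 4 : ℝ) * (γ * exp (-(log 2 / δ)) / √(3 * β)) ^ δ
        ≤ (1 + 1 / 3) / (1 / 3) ^ (1 / 4 : ℝ) * (γ * exp (-(log 2 / δ)) / √β) ^ δ := by
          gcongr
          linarith
      _ = γ ^ δ * exp (2 * log 2 - 3 / 4 * log 3 + log 2 / 16 - log 2) := by
          rw [four_thirds_div_rpow_eq, hsqrtβ, mul_div_assoc, ← exp_sub,
            mul_rpow hγ.le (exp_pos _).le, ← exp_mul, mul_left_comm, ← exp_add]
          congr 2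
          field_simp
          ring
      _ < γ ^ δ * exp (-(δ * t ^ 2 / 2)) := by
          gcongr
          linarith [seventeen_mul_log_two_lt]

lemma eventually_tailRatesLtOne {γ : ℝ} (hγ : 1 < γ) :
    ∀ᶠ δ in 𝓝[>] 0, TailRatesLtOne (γ * (2 : ℝ) ^ (-(1 : ℝ) / δ) * √(π / 2)) δ
      ((2 : ℝ) ^ (-(1 : ℝ) / (8 * δ))) := by
  have hdecay (s b : ℝ) (hb : 0 < b) :
      Tendsto (fun δ : ℝ => δ⁻¹ ^ s * exp (-b * δ⁻¹)) (𝓝[>] 0) (𝓝 0) :=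
    (tendsto_rpow_mul_exp_neg_mul_atTop_nhds_zero s b hb).comp tendsto_inv_nhdsGT_zero
  have hβ (δ : ℝ) : (2 : ℝ) ^ (-(1 : ℝ) / (8 * δ)) = exp (-(log 2 / 8) * δ⁻¹) := by
    rw [two_rpow_neg_one_div]; ring_nf
  have ht (δ : ℝ) : (γ * (2 : ℝ) ^ (-(1 : ℝ) / δ) * √(π / 2)) ^ 2 =
      γ ^ 2 * π / 2 * exp (-(2 * log 2) * δ⁻¹) := by
    rw [mul_pow, mul_pow, sq_sqrt (by positivity), two_rpow_neg_one_div, ← exp_nat_mul]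
    ring_nf
  have hlim₁ : Tendsto (fun δ : ℝ => (2 : ℝ) ^ (-(1 : ℝ) / (8 * δ)) / δ * (1 + log 2 / (8 * δ)) +
      (γ * (2 : ℝ) ^ (-(1 : ℝ) / δ) * √(π / 2)) ^ 2 / 2) (𝓝[>] 0) (𝓝 0) := by
    have h := ((hdecay 1 (log 2 / 8) (by positivity)).add
      ((hdecay 2 (log 2 / 8) (by positivity)).const_mul (log 2 / 8))).add
      ((hdecay 0 (2 * log 2) (by positivity)).const_mul (γ ^ 2 * π / 4))
    simp only [mul_zero, add_zero] at h
    refine h.congr fun δ => ?_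
    rw [hβ, ht, rpow_one, rpow_two, rpow_zero]
    ring
  have hlim₂ : Tendsto (fun δ : ℝ => δ * (γ * (2 : ℝ) ^ (-(1 : ℝ) / δ) * √(π / 2)) ^ 2)
      (𝓝[>] 0) (𝓝 0) := by
    have h := (hdecay (-1) (2 * log 2) (by positivity)).const_mul (γ ^ 2 * π / 2)
    rw [mul_zero] at h
    refine h.congr fun δ => ?_
    rw [ht, rpow_neg_one, inv_inv]
    ring
  have hgap : (0 : ℝ) < (12 * log 3 - 17 * log 2) / 8 := by linarith [seventeen_mul_log_two_lt]
  filter_upwards [hlim₁.eventually_lt_const (log_pos hγ), hlim₂.eventually_lt_const hgap,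
    self_mem_nhdsWithin] with δ h₁ h₂ hδ
  exact tailRatesLtOne_of_lt (by linarith) hδ h₁ h₂

open Finset in
lemma sum_Icc_choose_eq_sum_range {F : ℝ → ℝ} (hF : ∀ ρ, F (-ρ) = F ρ) (n : ℕ) :
    ∑ k ∈ Icc ((3 * n + 3) / 4) n, (n.choose k : ℝ) * F (1 - 2 * k / n) =
      ∑ k ∈ range (n / 4 + 1), (n.choose k : ℝ) * F (1 - 2 * k / n) := by
  refine sum_nbij' (n - ·) (n - ·) (fun k hk => ?_) (fun k hk => ?_) (fun k hk => ?_)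
    (fun k hk => ?_) (fun k hk => ?_) <;> simp only [Finset.mem_Icc, Finset.mem_range] at hk
  · simp only [Finset.mem_range]; omega
  · simp only [Finset.mem_Icc]; omega
  · omega
  · omega
  · rw [Nat.choose_symm hk.2, Nat.cast_sub hk.2]
    rcases n.eq_zero_or_pos with rfl | hn
    · simp
    · rw [← hF, show 1 - 2 * ((n : ℝ) - k) / n = -(1 - 2 * k / n) by field_simp; ring]

lemma eventually_setOf_abs_le_eq_Icc {ε : ℕ → ℝ} {t : ℝ} (hε : ∀ n : ℕ, ε n = √n * t) :
    ∀ᶠ n : ℕ in atTop,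
      {p : ℝ × ℝ | |√n * p.1| ≤ ε n ∧ |√n * p.2| ≤ ε n} = Icc (-t) t ×ˢ Icc (-t) t ∧
        {z : ℝ | |z| ≤ ε n / √n} = Icc (-t) t := by
  filter_upwards [eventually_gt_atTop 0] with n hn
  have hsqrt : 0 < √(n : ℝ) := sqrt_pos.2 (by exact_mod_cast hn)
  rw [hε, mul_div_cancel_left₀ _ hsqrt.ne']
  constructor <;> ext <;> simp only [mem_ofPred_eq, abs_mul, abs_of_pos hsqrt,
    mul_le_mul_iff_right₀ hsqrt, mem_prod, mem_Icc, abs_le]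

/-- **truncation in the linear regime.** For every `γ > 1` there is
`Δ = Δ(γ) > 0` such that for every `0 < δ ≤ Δ`, with `m = δ n` and
`ε = γ 2^{-1/δ} √(πn/2)`, the tail parts `k ≤ ⌊n/4⌋` and `k ≥ ⌈3n/4⌉` of
`2^n ∑_k C(n,k) P_{ρ_k}(|√n X| ≤ ε, |√n Y| ≤ ε)^m` are `o((2^n P(|Z| ≤ ε/√n)^m)²)`
as `n → ∞`, where `ρ_k = 1 − 2k/n`. -/
theorem linear_regime_truncation (γ : ℝ) (hγ : 1 < γ) :
    ∃ Δ : ℝ, 0 < Δ ∧ ∀ δ : ℝ, 0 < δ → δ ≤ Δ →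
      ∀ ε : ℕ → ℝ,
        (∀ n, ε n = γ * (2 : ℝ) ^ (-(1 : ℝ) / δ) * Real.sqrt (Real.pi * n / 2)) →
      ((fun n : ℕ => (2 : ℝ) ^ n * ∑ k ∈ Finset.range (n / 4 + 1), (n.choose k : ℝ) *
          ((corrPair (1 - 2 * (k : ℝ) / (n : ℝ)))
            {p : ℝ × ℝ | |Real.sqrt n * p.1| ≤ ε n ∧ |Real.sqrt n * p.2| ≤ ε n}).toReal
            ^ (δ * n : ℝ))
        =o[atTop]
        (fun n : ℕ => ((2 : ℝ) ^ n *
          ((gaussianReal 0 1) {z : ℝ | |z| ≤ ε n / Real.sqrt n}).toReal ^ (δ * n : ℝ)) ^ 2))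
      ∧
      ((fun n : ℕ => (2 : ℝ) ^ n * ∑ k ∈ Finset.Icc ((3 * n + 3) / 4) n, (n.choose k : ℝ) *
          ((corrPair (1 - 2 * (k : ℝ) / (n : ℝ)))
            {p : ℝ × ℝ | |Real.sqrt n * p.1| ≤ ε n ∧ |Real.sqrt n * p.2| ≤ ε n}).toReal
            ^ (δ * n : ℝ))
        =o[atTop]
        (fun n : ℕ => ((2 : ℝ) ^ n *
          ((gaussianReal 0 1) {z : ℝ | |z| ≤ ε n / Real.sqrt n}).toReal ^ (δ * n : ℝ)) ^ 2)) := by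
  obtain ⟨Δ, hΔ, hrates⟩ := mem_nhdsGT_iff_exists_Ioc_subset.1 (eventually_tailRatesLtOne hγ)
  refine ⟨Δ, hΔ, fun δ hδ hδΔ ε hε => ?_⟩
  set t := γ * (2 : ℝ) ^ (-(1 : ℝ) / δ) * √(π / 2)
  have hlow := lowerTail_isLittleO (by positivity) hδ.le (by positivity)
    (rpow_le_one_of_one_le_of_nonpos one_le_two (by field_simp; linarith)) (hrates ⟨hδ, hδΔ⟩)
  have hsets := eventually_setOf_abs_le_eq_Icc (ε := ε) (t := t) fun n => by
    rw [hε, mul_div_right_comm, sqrt_mul' _ (by positivity)]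
    ring
  have hg : ∀ᶠ n : ℕ in atTop,
      ((2 : ℝ) ^ n * (gaussianReal 0 1 (Icc (-t) t)).toReal ^ (δ * n)) ^ 2 =
      ((2 : ℝ) ^ n * (gaussianReal 0 1 {z : ℝ | |z| ≤ ε n / √n}).toReal ^ (δ * n)) ^ 2 := by
    filter_upwards [hsets] with n hn
    rw [hn.2]
  refine ⟨hlow.congr' ?_ hg, (EventuallyEq.trans_isLittleO ?_ hlow).congr' EventuallyEq.rfl hg⟩
  · filter_upwards [hsets] with n hn
    rw [hn.1]
  · filter_upwards [hsets] with n hn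
    rw [hn.1]
    congr 1
    exact sum_Icc_choose_eq_sum_range
      (F := fun ρ => (corrPair ρ (Icc (-t) t ×ˢ Icc (-t) t)).toReal ^ (δ * n))
      (fun ρ => by rw [corrPair_neg_prod_Icc ρ measurableSet_Icc]) n
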